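/- arXiv:math/0504522 — 2 statements merged into one kernel-verified Lean document; each statement's English description precedes it below -/
import Mathlib

section
/- If C ⊆ GF(4)^n is a self-dual additive code (with respect to the Hermitian trace inner product) in which every codeword has even Hamming weight, then n is even. That is, Type II self-dual additive codes over GF(4) exist only in even lengths. -/
open Finset
open scoped Classical

noncomputable section

/-- The Hermitian trace inner product on `GF(4)^n`. -/
def trinner {n : ℕ} (u v : Fin n → GaloisField 2 2) : GaloisField 2 2 :=
  ∑ i, (u i * v i ^ 2 + u i ^ 2 * v i)

/-- The dual of a set of vectors with respect to the Hermitian trace inner product. -/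
def trdual {n : ℕ} (C : Set (Fin n → GaloisField 2 2)) : Set (Fin n → GaloisField 2 2) :=
  {v | ∀ u ∈ C, trinner u v = 0}

/-- The Hamming weight of a vector in `GF(4)^n`. -/
def wt {n : ℕ} (u : Fin n → GaloisField 2 2) : ℕ :=
  (Finset.univ.filter fun i => u i ≠ 0).card


/-!
The proof is Gauss-sum counting. On `GF(4)` the cube map sends `0 ↦ 0` and every other
element to `1`, so `Q u = ∑ i, u i ^ 3` is the Hamming weight of `u` modulo 2, and
`Q (u + v) = Q u + Q v + trinner u v` with all three terms in `GF(2)`. Summing the sign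
`(-1) ^ Q (u + v)` over `u ∈ C` and all `v ∈ GF(4)^n` gives `|C| * (-2) ^ n` (translate `v`, then
factor over coordinates), and also `|C| ^ 2`: for `v ∈ C` every term is `1`, while for `v ∉ C = C^⊥`
the sum over `u` is a nontrivial character sum. Hence `|C| = (-2) ^ n`, which forces `n` to be even.
-/

local notation "𝔽₄" => GaloisField 2 2

section CharTwo

variable {K : Type*} [CommRing K] [CharP K 2]

def IsBit (x : K) : Prop := x = 0 ∨ x = 1

theorem IsBit.add {a b : K} (ha : IsBit a) (hb : IsBit b) : IsBit (a + b) := by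
  rcases ha with rfl | rfl <;> rcases hb with rfl | rfl <;>
    simp [IsBit, CharTwo.add_self_eq_zero]

theorem isBit_sum {ι : Type*} (s : Finset ι) {f : ι → K} (h : ∀ i ∈ s, IsBit (f i)) :
    IsBit (∑ i ∈ s, f i) :=
  Finset.sum_induction f IsBit (fun _ _ => IsBit.add) (Or.inl rfl) h

/-- `(-1) ^ x` for `x` in the prime field `GF(2) ⊆ K`; meaningful only on `IsBit` elements. -/
def bitSign (x : K) : ℤ := if x = 0 then 1 else -1

variable [Nontrivial K]

theorem bitSign_add {a b : K} (ha : IsBit a) (hb : IsBit b) :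
    bitSign (a + b) = bitSign a * bitSign b := by
  rcases ha with rfl | rfl <;> rcases hb with rfl | rfl <;>
    simp [bitSign, CharTwo.add_self_eq_zero]

theorem bitSign_sum {ι : Type*} (s : Finset ι) {f : ι → K} (h : ∀ i ∈ s, IsBit (f i)) :
    bitSign (∑ i ∈ s, f i) = ∏ i ∈ s, bitSign (f i) := by
  induction s using Finset.induction_on with
  | empty => simp [bitSign]
  | insert a s ha ih =>
    rw [Finset.sum_insert ha, Finset.prod_insert ha,
      bitSign_add (h a (mem_insert_self a s)) (isBit_sum s fun i hi => h i (mem_insert_of_mem hi)),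
      ih fun i hi => h i (mem_insert_of_mem hi)]

end CharTwo

theorem Fintype.sum_eq_zero_of_add_right_eq_neg {G : Type*} [AddGroup G] [Fintype G]
    (f : G → ℤ) (g : G) (hf : ∀ x, f (x + g) = -f x) : ∑ x, f x = 0 := by
  have h := Equiv.sum_comp (Equiv.addRight g) f
  simp only [Equiv.coe_addRight, hf, Finset.sum_neg_distrib] at h
  linarith

namespace GaloisField

noncomputable instance : Fintype 𝔽₄ := Fintype.ofFinite _

theorem card_two_two : Fintype.card 𝔽₄ = 4 := by
  simpa [Nat.card_eq_fintype_card] using GaloisField.card 2 2 two_ne_zero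

theorem pow_four_two_two (x : 𝔽₄) : x ^ 4 = x := by
  simpa [card_two_two] using FiniteField.pow_card x

theorem pow_three_two_two {x : 𝔽₄} (hx : x ≠ 0) : x ^ 3 = 1 := by
  simpa [card_two_two] using FiniteField.pow_card_sub_one_eq_one x hx

theorem isBit_pow_three_two_two (x : 𝔽₄) : IsBit (x ^ 3) := by
  by_cases hx : x = 0
  · exact Or.inl (by simp [hx])
  · exact Or.inr (pow_three_two_two hx)

theorem sum_bitSign_pow_three_two_two : ∑ x : 𝔽₄, bitSign (x ^ 3) = -2 := by
  have h : ∀ x : 𝔽₄, bitSign (x ^ 3) = (if x = 0 then 2 else 0) - 1 := by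
    intro x
    by_cases hx : x = 0
    · simp [bitSign, hx]
    · simp [bitSign, hx, pow_three_two_two hx]
  simp [h, Finset.sum_sub_distrib, card_two_two]

end GaloisField

open GaloisField

section Forms

variable {n : ℕ}

/-- The quadratic form polarizing to `trinner`; `x ↦ x ^ 3` is the norm `GF(4) → GF(2)`. -/
def cubeSum (u : Fin n → 𝔽₄) : 𝔽₄ := ∑ i, u i ^ 3

theorem isBit_cubeSum (u : Fin n → 𝔽₄) : IsBit (cubeSum u) :=
  isBit_sum _ fun i _ => isBit_pow_three_two_two (u i)

theorem cubeSum_eq_wt (u : Fin n → 𝔽₄) : cubeSum u = (wt u : 𝔽₄) := by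
  rw [cubeSum, wt, Finset.card_filter, Nat.cast_sum]
  refine Finset.sum_congr rfl fun i _ => ?_
  by_cases hi : u i = 0
  · simp [hi]
  · simp [hi, pow_three_two_two hi]

theorem cubeSum_eq_zero_of_even_wt {u : Fin n → 𝔽₄} (h : Even (wt u)) : cubeSum u = 0 := by
  obtain ⟨k, hk⟩ := h
  rw [cubeSum_eq_wt, hk, Nat.cast_add, CharTwo.add_self_eq_zero]

theorem isBit_trinner (u v : Fin n → 𝔽₄) : IsBit (trinner u v) := by
  refine isBit_sum _ fun i _ => IsIdempotentElem.iff_eq_zero_or_one.1 ?_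
  rw [IsIdempotentElem, ← sq]
  -- the Frobenius `x ↦ x ^ 2` swaps the two summands
  linear_combination u i ^ 2 * pow_four_two_two (v i) + v i ^ 2 * pow_four_two_two (u i)
    + u i ^ 3 * v i ^ 3 * CharTwo.two_eq_zero (R := 𝔽₄)

theorem trinner_add_left (u u' v : Fin n → 𝔽₄) :
    trinner (u + u') v = trinner u v + trinner u' v := by
  simp only [trinner, ← Finset.sum_add_distrib, Pi.add_apply]
  refine Finset.sum_congr rfl fun i _ => ?_
  linear_combination (u i * u' i * v i) * CharTwo.two_eq_zero (R := 𝔽₄)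

theorem cubeSum_add (u v : Fin n → 𝔽₄) :
    cubeSum (u + v) = cubeSum u + cubeSum v + trinner u v := by
  simp only [cubeSum, trinner, ← Finset.sum_add_distrib, Pi.add_apply]
  refine Finset.sum_congr rfl fun i _ => ?_
  linear_combination (u i ^ 2 * v i + u i * v i ^ 2) * CharTwo.two_eq_zero (R := 𝔽₄)

theorem sum_bitSign_cubeSum : ∑ w : Fin n → 𝔽₄, bitSign (cubeSum w) = (-2) ^ n := by
  simp only [cubeSum, bitSign_sum _ fun i _ => isBit_pow_three_two_two _]
  rw [← sum_bitSign_pow_three_two_two, Fintype.sum_pow]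

end Forms

section Code

variable {n : ℕ} (C : AddSubgroup (Fin n → 𝔽₄))

theorem sum_bitSign_trinner_eq_zero {v : Fin n → 𝔽₄} (hv : v ∉ trdual C) :
    ∑ u : C, bitSign (trinner (u : Fin n → 𝔽₄) v) = 0 := by
  obtain ⟨u₀, hu₀, hu₀v⟩ : ∃ u₀ ∈ C, trinner u₀ v ≠ 0 := by simpa [trdual] using hv
  refine Fintype.sum_eq_zero_of_add_right_eq_neg _ ⟨u₀, hu₀⟩ fun u => ?_
  rw [AddSubgroup.coe_add, trinner_add_left, bitSign_add (isBit_trinner _ _) (isBit_trinner _ _),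
    (isBit_trinner u₀ v).resolve_left hu₀v]
  simp [bitSign]

variable {C}

theorem sum_bitSign_cubeSum_add (hC : (C : Set (Fin n → 𝔽₄)) = trdual C)
    (hII : ∀ u ∈ C, Even (wt u)) (v : Fin n → 𝔽₄) :
    ∑ u : C, bitSign (cubeSum ((u : Fin n → 𝔽₄) + v)) =
      if v ∈ C then (Fintype.card C : ℤ) else 0 := by
  split_ifs with hv
  · have h1 : ∀ u : C, bitSign (cubeSum ((u : Fin n → 𝔽₄) + v)) = 1 := fun u => by
      rw [cubeSum_eq_zero_of_even_wt (hII _ (C.add_mem u.2 hv))]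
      simp [bitSign]
    simp [h1]
  · have hv' : v ∉ trdual C := by rwa [← hC]
    have h1 : ∀ u : C, bitSign (cubeSum ((u : Fin n → 𝔽₄) + v)) =
        bitSign (cubeSum v) * bitSign (trinner u v) := fun u => by
        rw [cubeSum_add, cubeSum_eq_zero_of_even_wt (hII u u.2), zero_add,
          bitSign_add (isBit_cubeSum v) (isBit_trinner _ _)]
    simp only [h1, ← Finset.mul_sum, sum_bitSign_trinner_eq_zero C hv', mul_zero]

theorem card_eq_neg_two_pow (hC : (C : Set (Fin n → 𝔽₄)) = trdual C)
    (hII : ∀ u ∈ C, Even (wt u)) : (Fintype.card C : ℤ) = (-2) ^ n := by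
  have htrans (u : Fin n → 𝔽₄) : ∑ v, bitSign (cubeSum (u + v)) = (-2) ^ n :=
    (Equiv.sum_comp (Equiv.addLeft u) fun w => bitSign (cubeSum w)).trans sum_bitSign_cubeSum
  have hcard : (Fintype.card C : ℤ) ≠ 0 := Nat.cast_ne_zero.2 Fintype.card_ne_zero
  refine mul_left_cancel₀ hcard ?_
  calc (Fintype.card C : ℤ) * Fintype.card C
      = ∑ v, ∑ u : C, bitSign (cubeSum ((u : Fin n → 𝔽₄) + v)) := by
        simp only [sum_bitSign_cubeSum_add hC hII]
        rw [Finset.sum_ite, Finset.sum_const_zero, add_zero, Finset.sum_const, nsmul_eq_mul,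
          ← Fintype.card_subtype]
    _ = ∑ u : C, ∑ v, bitSign (cubeSum ((u : Fin n → 𝔽₄) + v)) := Finset.sum_comm
    _ = Fintype.card C * (-2) ^ n := by simp [htrans]

end Code

theorem stmt11 (n : ℕ) (C : Submodule (ZMod 2) (Fin n → GaloisField 2 2))
    (hC : (C : Set (Fin n → GaloisField 2 2)) = trdual (C : Set (Fin n → GaloisField 2 2)))
    (hII : ∀ u ∈ C, Even (wt u)) :
    Even n := by
  have hcard := card_eq_neg_two_pow (C := C.toAddSubgroup) hC hII
  have hpos : (0 : ℤ) < (-2) ^ n := hcard ▸ Nat.cast_pos.2 Fintype.card_pos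
  exact (Nat.even_or_odd n).resolve_right fun hodd => lt_asymm hpos (hodd.pow_neg (by norm_num))
end
end

section
/- Let C ⊆ GF(4)^n be a self-dual additive code (with respect to the Hermitian trace inner product) that contains a nonzero codeword of Hamming weight at most 2. Then C has a nontrivial automorphism: there exists a code equivalence map f of GF(4)^n with f(C) = C and f not equal to the identity map. -/
open Finset
open scoped Classical

noncomputable section

/-- A code equivalence map of `GF(4)^n`: a permutation of coordinates followed by
nonzero scalings and possible conjugations (`x ↦ x²`) of coordinates. -/
def IsEquivMap {n : ℕ}
    (f : (Fin n → GaloisField 2 2) → (Fin n → GaloisField 2 2)) : Prop :=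
  ∃ (σ : Equiv.Perm (Fin n)) (c : Fin n → GaloisField 2 2) (e : Fin n → ℕ),
    (∀ i, c i ≠ 0) ∧ (∀ i, e i = 1 ∨ e i = 2) ∧
    ∀ u i, f u i = c i * (u (σ i)) ^ (e i)

noncomputable instance : Fintype (GaloisField 2 2) := Fintype.ofFinite _

lemma F4card : Fintype.card (GaloisField 2 2) = 4 := by
  rw [← Nat.card_eq_fintype_card, GaloisField.card 2 2 (by norm_num)]; norm_num

lemma F4pow4 (x : GaloisField 2 2) : x ^ 4 = x := by
  have h := FiniteField.pow_card x
  rwa [F4card] at h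

lemma F4two : (2 : GaloisField 2 2) = 0 := by
  have h : ((2 : ℕ) : GaloisField 2 2) = 0 := CharP.cast_eq_zero _ 2
  exact_mod_cast h

lemma F4cube {a : GaloisField 2 2} (ha : a ≠ 0) : a ^ 3 = 1 := by
  have h := F4pow4 a
  have h2 : a * a ^ 3 = a * 1 := by rw [mul_one, ← pow_succ']; exact h
  exact mul_left_cancel₀ ha h2

lemma F4exists : ∃ x : GaloisField 2 2, x ^ 2 ≠ x := by
  by_contra h
  push_neg at h
  have hmem : ∀ x : GaloisField 2 2, x = 0 ∨ x = 1 := by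
    intro x
    have hx : x * (x - 1) = 0 := by linear_combination (h x)
    rcases mul_eq_zero.1 hx with h1 | h1
    · exact Or.inl h1
    · exact Or.inr (sub_eq_zero.mp h1)
  have hsub : (Finset.univ : Finset (GaloisField 2 2)) ⊆ {0, 1} := by
    intro x _
    rcases hmem x with h1 | h1 <;> simp [h1]
  have hcard : Fintype.card (GaloisField 2 2) ≤ 2 := by
    calc Fintype.card (GaloisField 2 2) = (Finset.univ : Finset (GaloisField 2 2)).card := rfl
      _ ≤ ({0, 1} : Finset (GaloisField 2 2)).card := Finset.card_le_card hsub
      _ ≤ 2 := by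
          apply le_trans (Finset.card_insert_le _ _)
          simp
  rw [F4card] at hcard
  omega

lemma F4key {a : GaloisField 2 2} (x : GaloisField 2 2) (ha : a ≠ 0) :
    a ^ 2 * x ^ 2 + x = 0 ∨ a ^ 2 * x ^ 2 + x = a := by
  have hx : x ^ 4 = x := F4pow4 x
  have ha3 : a ^ 3 = 1 := F4cube ha
  have h2 : (2 : GaloisField 2 2) = 0 := F4two
  have h0 : (a ^ 2 * x ^ 2 + x) * (a ^ 2 * x ^ 2 + x + a) = 0 := by
    linear_combination a ^ 4 * hx + (x ^ 2 + a * x) * ha3 + (a ^ 2 * x ^ 3 + x ^ 2 + a * x) * h2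
  rcases mul_eq_zero.1 h0 with h1 | h1
  · exact Or.inl h1
  · right
    have := eq_neg_of_add_eq_zero_left h1
    rw [this]
    linear_combination -a * h2

theorem stmt16 (n : ℕ) (C : Submodule (ZMod 2) (Fin n → GaloisField 2 2))
    (hC : (C : Set (Fin n → GaloisField 2 2)) = trdual (C : Set (Fin n → GaloisField 2 2)))
    (u : Fin n → GaloisField 2 2) (hu : u ∈ C) (hu0 : u ≠ 0) (hwu : wt u ≤ 2) :
    ∃ f : (Fin n → GaloisField 2 2) → (Fin n → GaloisField 2 2),
      IsEquivMap f ∧ f '' (C : Set (Fin n → GaloisField 2 2)) = C ∧ f ≠ id := by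
  classical
  obtain ⟨ω, hω⟩ := F4exists
  have h2 := F4two
  set S : Finset (Fin n) := Finset.univ.filter (fun i => u i ≠ 0) with hSdef
  have hS2 : S.card ≤ 2 := hwu
  have hS1 : 1 ≤ S.card := by
    rcases Function.ne_iff.mp hu0 with ⟨k, hk⟩
    have hkS : k ∈ S := by simp [hSdef]; exact hk
    exact Finset.card_pos.mpr ⟨k, hkS⟩
  have htr : ∀ v ∈ C, ∑ k ∈ S, (u k * v k ^ 2 + u k ^ 2 * v k) = 0 := by
    intro v hv
    have hv' : v ∈ trdual (C : Set (Fin n → GaloisField 2 2)) := by rw [← hC]; exact hv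
    have h0 : trinner u v = 0 := hv' u hu
    rw [trinner] at h0
    rw [← h0, hSdef]
    exact Finset.sum_filter_of_ne (fun k _ hk h0k => hk (by simp [h0k]))
  set f : (Fin n → GaloisField 2 2) → (Fin n → GaloisField 2 2) :=
    fun v k => if u k ≠ 0 then (u k) ^ 2 * (v k) ^ 2 else v k with hf
  have hff : ∀ v, f (f v) = v := by
    intro v; funext k
    simp only [hf]
    by_cases hk : u k ≠ 0
    · rw [if_pos hk, if_pos hk]
      have h3 := F4cube hk
      have h4 := F4pow4 (v k)
      linear_combination ((u k) ^ 3 + 1) * (v k) ^ 4 * h3 + h4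
    · rw [if_neg hk, if_neg hk]
  have hmain : ∀ v ∈ C, f v = v ∨ f v = v + u := by
    intro v hv
    have hsum := htr v hv
    rcases (by omega : S.card = 1 ∨ S.card = 2) with hc | hc
    · obtain ⟨i, hi⟩ := Finset.card_eq_one.mp hc
      have hmem : ∀ k, u k ≠ 0 ↔ k = i := by
        intro k
        rw [show (u k ≠ 0) ↔ k ∈ S by simp [hSdef], hi, Finset.mem_singleton]
      have hui : u i ≠ 0 := (hmem i).mpr rfl
      rw [hi, Finset.sum_singleton] at hsum
      left
      funext k
      simp only [hf]
      by_cases hk : u k ≠ 0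
      · obtain rfl := (hmem k).mp hk
        rw [if_pos hk]
        have ha3 := F4cube hk
        linear_combination (u k) * hsum - (v k) * ha3 - (v k) * h2
      · rw [if_neg hk]
    · obtain ⟨i, j, hij, hS⟩ := Finset.card_eq_two.mp hc
      have hmem : ∀ k, u k ≠ 0 ↔ (k = i ∨ k = j) := by
        intro k
        rw [show (u k ≠ 0) ↔ k ∈ S by simp [hSdef], hS]
        simp
      have hui : u i ≠ 0 := (hmem i).mpr (Or.inl rfl)
      have huj : u j ≠ 0 := (hmem j).mpr (Or.inr rfl)
      rw [hS, Finset.sum_pair hij] at hsum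
      have hconstr : (u i) ^ 2 * ((u i) ^ 2 * (v i) ^ 2 + v i)
          + (u j) ^ 2 * ((u j) ^ 2 * (v j) ^ 2 + v j) = 0 := by
        have h4i := F4pow4 (u i)
        have h4j := F4pow4 (u j)
        linear_combination hsum + (v i) ^ 2 * h4i + (v j) ^ 2 * h4j
      rcases F4key (v i) hui with hsi | hsi
      · have htj : (u j) ^ 2 * (v j) ^ 2 + v j = 0 := by
          have hbne : (u j) ^ 2 ≠ 0 := pow_ne_zero _ huj
          have hmul : (u j) ^ 2 * ((u j) ^ 2 * (v j) ^ 2 + v j) = 0 := by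
            linear_combination hconstr - (u i) ^ 2 * hsi
          exact (mul_eq_zero.1 hmul).resolve_left hbne
        left
        funext k
        simp only [hf]
        by_cases hk : u k ≠ 0
        · rw [if_pos hk]
          rcases (hmem k).mp hk with rfl | rfl
          · linear_combination hsi - (v k) * h2
          · linear_combination htj - (v k) * h2
        · rw [if_neg hk]
      · have ha3 := F4cube hui
        have hb3 := F4cube huj
        have htj : (u j) ^ 2 * (v j) ^ 2 + v j = u j := by
          have hbt : (u j) ^ 2 * ((u j) ^ 2 * (v j) ^ 2 + v j) = (u j) ^ 2 * (u j) := by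
            linear_combination hconstr - (u i) ^ 2 * hsi - ha3 + hb3 - (u j) ^ 3 * h2
          exact mul_left_cancel₀ (pow_ne_zero 2 huj) hbt
        right
        funext k
        simp only [hf, Pi.add_apply]
        by_cases hk : u k ≠ 0
        · rw [if_pos hk]
          rcases (hmem k).mp hk with rfl | rfl
          · linear_combination hsi - (v k) * h2
          · linear_combination htj - (v k) * h2
        · rw [if_neg hk]
          push_neg at hk
          rw [hk, add_zero]
  have hmemC : ∀ v ∈ C, f v ∈ C := by
    intro v hv
    rcases hmain v hv with h | h
    · rw [h]; exact hv
    · rw [h]; exact C.add_mem hv hu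
  refine ⟨f, ?_, ?_, ?_⟩
  · refine ⟨Equiv.refl _, fun k => if u k ≠ 0 then (u k) ^ 2 else 1,
      fun k => if u k ≠ 0 then 2 else 1, ?_, ?_, ?_⟩
    · intro i
      by_cases hk : u i ≠ 0 <;> simp [hk]
    · intro i
      by_cases hk : u i ≠ 0 <;> simp [hk]
    · intro v i
      by_cases hk : u i ≠ 0 <;> simp [hf, hk]
  · apply Set.Subset.antisymm
    · rintro _ ⟨v, hv, rfl⟩
      exact hmemC v hv
    · intro v hv
      exact ⟨f v, hmemC v hv, hff v⟩
  · obtain ⟨i0, hi0⟩ := Finset.card_pos.mp (by omega : 0 < S.card)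
    have hui0 : u i0 ≠ 0 := by
      have := hi0
      rw [hSdef, Finset.mem_filter] at this
      exact this.2
    have hx : ∃ x : GaloisField 2 2, (u i0) ^ 2 * x ^ 2 ≠ x := by
      by_contra h
      push_neg at h
      have ha2 : (u i0) ^ 2 = 1 := by
        have h1 := h 1
        simpa using h1
      have hωx := h ω
      rw [ha2, one_mul] at hωx
      exact hω hωx
    obtain ⟨x, hx⟩ := hx
    intro hfeq
    have heq := congrFun (congrFun hfeq (fun k => if k = i0 then x else 0)) i0
    simp only [hf, id_eq, if_pos hui0, if_pos rfl] at heq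
    exact hx heq
end
end
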